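/- If f is a C¹ probability density on the circle whose derivative f' is Lipschitz, and 0 ≤ ε < 1, then the coupling map Φ_f is a C² diffeomorphism of the circle T. -/

import Mathlib

open MeasureTheory Function Set

/-- The sawtooth interaction function `g` on the circle, lifted 1-periodically to `ℝ`:
`g(u) = u` for `u ∈ (-1/2, 1/2)` and `g(±1/2) = 0`. -/
noncomputable def saw (u : ℝ) : ℝ :=
  if Int.fract (u + 1/2) = 0 then 0 else u - (round u : ℤ)

/-- The lift of the diffusive coupling map `Φ_f(x) = x + ε ∫ g(y-x) f(y) dy`. -/
noncomputable def Phi (ε : ℝ) (f : ℝ → ℝ) (x : ℝ) : ℝ :=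
  x + ε * ∫ y in (0:ℝ)..1, saw (y - x) * f y

/-- Property (F): `f` is a C¹ probability density on the circle (1-periodic on `ℝ`). -/
def PropF (f : ℝ → ℝ) : Prop :=
  ContDiff ℝ 1 f ∧ Function.Periodic f 1 ∧ (∀ x, 0 ≤ f x) ∧ (∫ x in (0:ℝ)..1, f x) = 1

/-- `f'` is Lipschitz. -/
def LipDeriv (f : ℝ → ℝ) : Prop := ∃ L : ℝ, ∀ x y, |deriv f x - deriv f y| ≤ L * |x - y|

/-- Total variation over one period, for C¹ functions. -/
noncomputable def tvar (f : ℝ → ℝ) : ℝ := ∫ x in (0:ℝ)..1, |deriv f x|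

/-- L¹ norm over one period. -/
noncomputable def l1 (f : ℝ → ℝ) : ℝ := ∫ x in (0:ℝ)..1, |f x|

/-- BV norm for C¹ functions. -/
noncomputable def bv (f : ℝ → ℝ) : ℝ := l1 f + tvar f

/-- Transfer (Perron–Frobenius) operator of an `N`-fold covering map given by its
(bijective, strictly monotone) lift `F : ℝ → ℝ`. -/
noncomputable def transfer (F : ℝ → ℝ) (N : ℕ) (u : ℝ → ℝ) (y : ℝ) : ℝ :=
  ∑ k ∈ Finset.range N,
    u (Function.invFun F (y + k)) / |deriv F (Function.invFun F (y + k))|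

/-- Property (T): `T` is (the lift of) a C² `N`-fold covering expanding circle map with
`min |T'| = ω > 1`, `T''` Lipschitz, `N < ω²`. -/
def PropT (T : ℝ → ℝ) (N : ℕ) (ω : ℝ) : Prop :=
  ContDiff ℝ 2 T ∧
  ((∀ x, T (x + 1) = T x + N) ∨ (∀ x, T (x + 1) = T x - N)) ∧
  (∀ x, ω ≤ |deriv T x|) ∧ 1 < ω ∧
  (∃ L : ℝ, ∀ x y, |deriv (deriv T) x - deriv (deriv T) y| ≤ L * |x - y|) ∧
  (N : ℝ) < ω ^ 2

/-- The self-consistent transfer operator `F_ε(f) = P_{T ∘ Φ_f} f`. -/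
noncomputable def Feps (T : ℝ → ℝ) (N : ℕ) (ε : ℝ) (f : ℝ → ℝ) : ℝ → ℝ :=
  transfer (T ∘ Phi ε f) N f

/-- The class `C_{R,S}^c` of densities. -/
def CRSc (R S c : ℝ) : Set (ℝ → ℝ) :=
  {f | PropF f ∧ tvar f ≤ R ∧ (∀ x, |deriv f x| ≤ S) ∧
    ∀ x y, |deriv f x - deriv f y| ≤ c * |x - y|}

/-- Property (F'): `f` satisfies (F), has Lipschitz derivative, and its support avoids
(an interval of length `1/2` on the circle, i.e.) all integer translates of some `[a, a+1/2]`. -/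
def PropF' (f : ℝ → ℝ) : Prop :=
  PropF f ∧ LipDeriv f ∧
    ∃ a : ℝ, ∀ x, f x ≠ 0 → ∀ k : ℤ, x + (k : ℝ) ∉ Set.Icc a (a + 1/2)

/-- The length of the minimal closed arc of the circle containing the support of `f`. -/
noncomputable def suppLen (f : ℝ → ℝ) : ℝ :=
  sInf {L | 0 ≤ L ∧ ∃ a : ℝ, ∀ x, f x ≠ 0 → ∃ k : ℤ, x + (k : ℝ) ∈ Set.Icc a (a + L)}

/-- Wasserstein-1 distance between the measure `f dλ` on the circle and the point mass `δ_y`,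
via Kantorovich–Rubinstein duality (1-Lipschitz periodic test functions). -/
noncomputable def W1delta (f : ℝ → ℝ) (y : ℝ) : ℝ :=
  ⨆ ℓ : {ℓ : ℝ → ℝ // LipschitzWith 1 ℓ ∧ Function.Periodic ℓ 1},
    |(∫ x in (0:ℝ)..1, ℓ.1 x * f x) - ℓ.1 y|

/-- BV norm for (not necessarily C¹) functions of bounded variation. -/
noncomputable def bvBV (u : ℝ → ℝ) : ℝ :=
  l1 u + (eVariationOn u (Set.Icc (0:ℝ) 1)).toReal

/-!
On the window `[x - 1/2, x + 1/2]` the sawtooth `saw (y - x)` is just `y - x`, so for a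
1-periodic density of mass one
`Φ_f(x) = (1 - ε) x + ε ∫_{x-1/2}^{x+1/2} y f(y) dy`.
Differentiating, and using `f (x - 1/2) = f (x + 1/2)`, gives
`Φ_f'(x) = 1 - ε + ε f(x + 1/2) ≥ 1 - ε > 0`, a C¹ function. Hence `Φ_f` is a C² strictly
increasing lift of a degree-one circle map, so a homeomorphism of `ℝ`, and the inverse function
theorem makes its inverse C².
-/

lemma hasDerivAt_integral_sub_add {g : ℝ → ℝ} (hg : Continuous g) (a x : ℝ) :
    HasDerivAt (fun x => ∫ y in x - a..x + a, g y) (g (x + a) - g (x - a)) x := by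
  have h_prim : ∀ t, HasDerivAt (fun t => ∫ y in (0:ℝ)..t, g y) (g t) t := fun t =>
    intervalIntegral.integral_hasDerivAt_right (hg.intervalIntegrable _ _)
      (hg.stronglyMeasurableAtFilter _ _) hg.continuousAt
  have h_split : (fun x => ∫ y in x - a..x + a, g y)
      = fun x => (∫ y in (0:ℝ)..x + a, g y) - ∫ y in (0:ℝ)..x - a, g y := by
    ext x
    rw [intervalIntegral.integral_interval_sub_left (hg.intervalIntegrable _ _)
      (hg.intervalIntegrable _ _)]
  rw [h_split]
  exact ((h_prim _).comp_add_const x a).sub ((h_prim _).comp_sub_const x a)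

lemma contDiff_succ_of_hasDerivAt {F F' : ℝ → ℝ} {n : ℕ} (hF : ∀ x, HasDerivAt F (F' x) x)
    (hF' : ContDiff ℝ n F') : ContDiff ℝ (n + 1) F := by
  have h_deriv : deriv F = F' := funext fun x => (hF x).deriv
  exact contDiff_succ_iff_deriv.2 ⟨fun x => (hF x).differentiableAt, by simp, h_deriv ▸ hF'⟩

lemma surjective_of_map_add_one {F : ℝ → ℝ} (hmono : Monotone F) (hcont : Continuous F)
    (hF : ∀ x, F (x + 1) = F x + 1) : Surjective F :=
  (CircleDeg1Lift.continuous_iff_surjective ⟨⟨F, hmono⟩, hF⟩).1 hcont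

lemma contDiff_invFun_of_hasDerivAt_pos {F F' : ℝ → ℝ} {n : WithTop ℕ∞} (hF : ContDiff ℝ n F)
    (hderiv : ∀ x, HasDerivAt F (F' x) x) (hpos : ∀ x, 0 < F' x) (hsurj : Surjective F) :
    ContDiff ℝ n (invFun F) := by
  have hmono := strictMono_of_hasDerivAt_pos hderiv hpos
  let e : ℝ ≃o ℝ := hmono.orderIsoOfSurjective F hsurj
  have h_inv : invFun F = e.symm :=
    invFun_eq_of_injective_of_rightInverse hmono.injective e.apply_symm_apply
  rw [h_inv, ← e.coe_toHomeomorph_symm]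
  exact e.toHomeomorph.contDiff_symm_deriv (fun x => (hpos x).ne') hderiv hF

lemma saw_periodic : Periodic saw 1 := by
  intro u
  have h_fract : Int.fract (u + 1 + 1/2) = Int.fract (u + 1/2) := by
    rw [add_right_comm, Int.fract_add_one]
  have h_round : round (u + 1) = round u + 1 := by
    exact_mod_cast round_add_intCast u 1
  simp only [saw, h_fract, h_round]
  split_ifs <;> push_cast <;> ring

lemma saw_eq_self {u : ℝ} (hu : u ∈ Ioo (-(1/2)) (1/2)) : saw u = u := by
  obtain ⟨hlo, hhi⟩ := hu
  have h_fract : Int.fract (u + 1/2) = u + 1/2 :=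
    Int.fract_eq_self.2 ⟨by linarith, by linarith⟩
  have h_round : round u = 0 := round_eq_zero_iff.2 ⟨by linarith, by linarith⟩
  rw [saw, h_fract, if_neg (by linarith), h_round]
  simp

lemma Phi_add_one (ε : ℝ) (f : ℝ → ℝ) (x : ℝ) : Phi ε f (x + 1) = Phi ε f x + 1 := by
  have h_saw : ∀ y, saw (y - (x + 1)) = saw (y - x) := fun y => by
    rw [← sub_sub]; exact saw_periodic.sub_eq (y - x)
  simp only [Phi, h_saw]
  ring

section Density

variable {f : ℝ → ℝ}

lemma integral_sub_half_add_half (hper : Periodic f 1) (x : ℝ) :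
    ∫ y in x - 1/2..x + 1/2, f y = ∫ y in (0:ℝ)..1, f y := by
  have h := hper.intervalIntegral_add_eq (x - 1/2) 0
  rwa [show x - 1/2 + 1 = x + 1/2 by ring, zero_add] at h

lemma integral_saw_mul (hper : Periodic f 1) (x : ℝ) :
    ∫ y in (0:ℝ)..1, saw (y - x) * f y = ∫ y in x - 1/2..x + 1/2, (y - x) * f y := by
  have hp : Periodic (fun y => saw (y - x) * f y) 1 := fun y => by
    simp only [add_sub_right_comm, saw_periodic (y - x), hper y]
  rw [← integral_sub_half_add_half hp x]
  refine intervalIntegral.integral_congr_Ioo_of_le (by linarith) fun y hy => ?_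
  rw [saw_eq_self ⟨by linarith [hy.1], by linarith [hy.2]⟩]

lemma Phi_eq_integral (hper : Periodic f 1) (hfc : Continuous f)
    (hmass : ∫ y in (0:ℝ)..1, f y = 1) (ε x : ℝ) :
    Phi ε f x = (1 - ε) * x + ε * ∫ y in x - 1/2..x + 1/2, y * f y := by
  have h_split : ∫ y in x - 1/2..x + 1/2, (y - x) * f y
      = (∫ y in x - 1/2..x + 1/2, y * f y) - x * ∫ y in x - 1/2..x + 1/2, f y := by
    simp only [sub_mul, ← intervalIntegral.integral_const_mul]
    exact intervalIntegral.integral_sub ((continuous_id.mul hfc).intervalIntegrable _ _)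
      ((continuous_const.mul hfc).intervalIntegrable _ _)
  rw [Phi, integral_saw_mul hper, h_split, integral_sub_half_add_half hper, hmass]
  ring

lemma hasDerivAt_Phi (hper : Periodic f 1) (hfc : Continuous f)
    (hmass : ∫ y in (0:ℝ)..1, f y = 1) (ε x : ℝ) :
    HasDerivAt (Phi ε f) (1 - ε + ε * f (x + 1/2)) x := by
  have hc : Continuous fun y => y * f y := by fun_prop
  have h_int := hasDerivAt_integral_sub_add hc (1/2) x
  have h_fx : f (x - 1/2) = f (x + 1/2) := by
    rw [← hper (x - 1/2)]
    congr 1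
    ring
  rw [show Phi ε f = _ from funext (Phi_eq_integral hper hfc hmass ε)]
  refine (((hasDerivAt_id x).const_mul (1 - ε)).add (h_int.const_mul ε)).congr_deriv ?_
  rw [h_fx]
  ring

end Density

theorem coupling_C2_diffeo_general (ε : ℝ) (hε0 : 0 ≤ ε) (hε1 : ε < 1)
    (f : ℝ → ℝ) (hf : PropF f) :
    ContDiff ℝ 2 (Phi ε f) ∧
    (∀ x, Phi ε f (x + 1) = Phi ε f x + 1) ∧
    Function.Bijective (Phi ε f) ∧
    ContDiff ℝ 2 (Function.invFun (Phi ε f)) := by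
  obtain ⟨hC1, hper, hnonneg, hmass⟩ := hf
  have hderiv := hasDerivAt_Phi hper hC1.continuous hmass ε
  have hpos : ∀ x, 0 < 1 - ε + ε * f (x + 1/2) := fun x => by
    linarith [mul_nonneg hε0 (hnonneg (x + 1/2))]
  have hC2 : ContDiff ℝ 2 (Phi ε f) := contDiff_succ_of_hasDerivAt hderiv
    (contDiff_const.add (contDiff_const.mul (hC1.comp (contDiff_id.add contDiff_const))))
  have hmono := strictMono_of_hasDerivAt_pos hderiv hpos
  have hsurj := surjective_of_map_add_one hmono.monotone hC2.continuous (Phi_add_one ε f)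
  exact ⟨hC2, Phi_add_one ε f, ⟨hmono.injective, hsurj⟩,
    contDiff_invFun_of_hasDerivAt_pos hC2 hderiv hpos hsurj⟩

/-- if `f` is a C¹ probability density with Lipschitz derivative and
`0 ≤ ε < 1`, then `Φ_f` is a C² diffeomorphism of the circle: its lift is C²,
bijective, commutes with `x ↦ x + 1`, and has a C² inverse. -/
theorem coupling_C2_diffeo (ε : ℝ) (hε0 : 0 ≤ ε) (hε1 : ε < 1)
    (f : ℝ → ℝ) (hf : PropF f) (hlip : LipDeriv f) :
    ContDiff ℝ 2 (Phi ε f) ∧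
    (∀ x, Phi ε f (x + 1) = Phi ε f x + 1) ∧
    Function.Bijective (Phi ε f) ∧
    ContDiff ℝ 2 (Function.invFun (Phi ε f)) :=
  coupling_C2_diffeo_general ε hε0 hε1 f hf
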